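/- Every permutation of GF(2^n) of Carlitz rank m ≥ 1 has c-differential uniformity at most m + 2 for every c ∈ GF(2^n) with c ≠ 1. -/

import Mathlib

/-! Outside at most `m` exceptional points, a Carlitz expression of length `m` is a single Möbius
transformation `x ↦ (αx + β)/(γx + δ)`: each inversion adds one pole. If neither `x` nor `x + a`
is exceptional, clearing denominators in `F(x + a) + c F(x) = b` gives a polynomial equation of
degree at most two which, as `c ≠ 1`, is not identically zero: at most two such solutions. Each
exceptional point `o` accounts for at most one solution among `o, o + a`: if both were solutions,
then in characteristic two the two equations differ by `(1 - c)(F(o + a) - F(o)) = 0`, so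
`a = 0` by injectivity. -/

/-- The number of solutions `x` of `F(x+a) + c·F(x) = b`. -/
noncomputable def cdCount (n : ℕ) (F : GaloisField 2 n → GaloisField 2 n)
    (c a b : GaloisField 2 n) : ℕ :=
  Nat.card {x : GaloisField 2 n // F (x + a) + c * F x = b}

/-- The `c`-differential uniformity of `F` (requiring `a ≠ 0` only when `c = 1`). -/
noncomputable def cdu (n : ℕ) (F : GaloisField 2 n → GaloisField 2 n)
    (c : GaloisField 2 n) : ℕ :=
  sSup {k : ℕ | ∃ a b : GaloisField 2 n, (c = 1 → a ≠ 0) ∧ k = cdCount n F c a b}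

/-- The Carlitz expression of length `m`:
`carl n a 0 x = a₀ x + a₁`, and `carl n a (m+1) x = (carl n a m x)⁻¹ + a (m+2)`,
so that `carl n a m` is
`(⋯((a₀x + a₁)^{2ⁿ−2} + a₂)^{2ⁿ−2} ⋯ + a_m)^{2ⁿ−2} + a_{m+1}`
(recall `x⁻¹ = x^{2ⁿ−2}` on `GF(2ⁿ)`, with `0⁻¹ = 0`). -/
noncomputable def carl (n : ℕ) (a : ℕ → GaloisField 2 n) :
    ℕ → GaloisField 2 n → GaloisField 2 n
  | 0 => fun x => a 0 * x + a 1
  | m + 1 => fun x => (carl n a m x)⁻¹ + a (m + 2)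

/-- `F` admits a Carlitz representation of length `m`. -/
def hasCarlitzRep (n m : ℕ) (F : GaloisField 2 n → GaloisField 2 n) : Prop :=
  ∃ a : ℕ → GaloisField 2 n,
    a 0 ≠ 0 ∧ (∀ i, 2 ≤ i → i ≤ m → a i ≠ 0) ∧ F = carl n a m

open Polynomial

section Mobius

variable {K : Type*} [Field K]

def IsMobiusOff (f : K → K) (O : Finset K) : Prop :=
  ∃ α β γ δ : K, α * δ - β * γ ≠ 0 ∧
    ∀ x ∉ O, γ * x + δ ≠ 0 ∧ f x = (α * x + β) / (γ * x + δ)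

theorem isMobiusOff_affine {a₀ : K} (ha₀ : a₀ ≠ 0) (a₁ : K) :
    IsMobiusOff (fun x => a₀ * x + a₁) ∅ :=
  ⟨a₀, a₁, 0, 1, by simpa using ha₀, fun x _ => by simp⟩

/-- The only new exceptional point is the pole `-β/α` of the inverted map. -/
theorem IsMobiusOff.exists_inv_add {f : K → K} {O : Finset K} (hf : IsMobiusOff f O) (t : K) :
    ∃ O' : Finset K, O'.card ≤ O.card + 1 ∧ IsMobiusOff (fun x => (f x)⁻¹ + t) O' := by
  classical
  obtain ⟨α, β, γ, δ, hdet, hf⟩ := hf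
  refine ⟨insert (-β / α) O, Finset.card_insert_le _ _, γ + t * α, δ + t * β, α, β,
    fun h => hdet ?_, fun x hx => ?_⟩
  · linear_combination -h
  rw [Finset.mem_insert, not_or] at hx
  obtain ⟨hxz, hxO⟩ := hx
  obtain ⟨hden, hfx⟩ := hf x hxO
  have hnum : α * x + β ≠ 0 := by
    intro h
    by_cases hα : α = 0
    · exact hdet (by simp_all)
    · exact hxz (eq_div_of_mul_eq hα (by linear_combination h))
  refine ⟨hnum, ?_⟩
  dsimp only
  rw [hfx, inv_div, div_add' _ _ _ hnum]
  ring

theorem exists_card_le_two_of_quadratic_eq_zero {A B C₀ : K} (hAB : A = 0 → B ≠ 0) :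
    ∃ R : Finset K, R.card ≤ 2 ∧ ∀ x, A * x ^ 2 + B * x + C₀ = 0 → x ∈ R := by
  classical
  set p : K[X] := C A * X ^ 2 + C B * X + C C₀
  have hp : p ≠ 0 := by
    intro h
    have h₂ := congrArg (coeff · 2) h
    have h₁ := congrArg (coeff · 1) h
    simp [p, coeff_C] at h₁ h₂
    exact hAB h₂ h₁
  refine ⟨p.roots.toFinset,
    (Multiset.toFinset_card_le _).trans (p.card_roots'.trans natDegree_quadratic_le),
    fun x hx => ?_⟩
  rw [Multiset.mem_toFinset, mem_roots hp, IsRoot, eval_add, eval_add]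
  simpa using hx

variable [CharP K 2]

theorem eq_zero_of_solution_pair {F : K → K} (hF : Function.Injective F) {c : K} (hc : c ≠ 1)
    {a b x : K} (hx : F (x + a) + c * F x = b) (hxa : F (x + a + a) + c * F (x + a) = b) :
    a = 0 := by
  rw [add_assoc, CharTwo.add_self_eq_zero, add_zero] at hxa
  have hdiff : (1 - c) * (F (x + a) - F x) = 0 := by linear_combination hx - hxa
  have hFeq : F (x + a) = F x :=
    sub_eq_zero.mp ((mul_eq_zero.mp hdiff).resolve_left (sub_ne_zero.mpr hc.symm))
  simpa using hF hFeq

theorem mobius_solution_quadratic {α β γ δ c a b x : K} (hu : γ * x + δ ≠ 0)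
    (hv : γ * (x + a) + δ ≠ 0)
    (h : (α * (x + a) + β) / (γ * (x + a) + δ) + c * ((α * x + β) / (γ * x + δ)) = b) :
    γ * ((1 + c) * α + b * γ) * x ^ 2
      + ((1 + c) * (α * δ - β * γ) + a * (γ * ((1 + c) * α + b * γ))) * x
      + ((α * a + β) * δ + c * β * (γ * a + δ) + b * (γ * a + δ) * δ) = 0 := by
  rw [mul_div_assoc', div_add_div _ _ hv hu, div_eq_iff (mul_ne_zero hv hu)] at h
  linear_combination h + (b * (γ * x + δ) * (γ * (x + a) + δ) - (b * δ + (1 + c) * β) * γ * x)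
    * CharTwo.two_eq_zero (R := K)

theorem ncard_solutions_inter_pair_le_one {F : K → K} (hF : Function.Injective F) {c : K}
    (hc : c ≠ 1) (a b o : K) : ({x | F (x + a) + c * F x = b} ∩ {o, o + a}).ncard ≤ 1 := by
  have hshift : F (o + a) + c * F o = b → F (o + a + a) + c * F (o + a) = b → a = 0 :=
    eq_zero_of_solution_pair hF hc
  refine (Set.ncard_le_one_iff (Set.toFinite _)).mpr ?_
  rintro x y ⟨hx, rfl | rfl⟩ ⟨hy, rfl | rfl⟩
  · rfl
  · simp [hshift hx hy]
  · simp [hshift hy hx]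
  · rfl

theorem IsMobiusOff.ncard_solutions_le {F : K → K} {O : Finset K} (hO : IsMobiusOff F O)
    (hF : Function.Injective F) {c : K} (hc : c ≠ 1) (a b : K) :
    {x | F (x + a) + c * F x = b}.ncard ≤ O.card + 2 := by
  obtain ⟨α, β, γ, δ, hdet, hO⟩ := hO
  set S := {x | F (x + a) + c * F x = b}
  have hc1 : 1 + c ≠ 0 := fun h => hc (CharTwo.add_eq_zero.mp h).symm
  obtain ⟨R, hR, hRmem⟩ := exists_card_le_two_of_quadratic_eq_zero
    (A := γ * ((1 + c) * α + b * γ))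
    (B := (1 + c) * (α * δ - β * γ) + a * (γ * ((1 + c) * α + b * γ)))
    (C₀ := (α * a + β) * δ + c * β * (γ * a + δ) + b * (γ * a + δ) * δ)
    -- `B = (1 + c)(αδ - βγ) + a A`, so `A = 0` forces `B ≠ 0`
    (fun hA => by rw [hA, mul_zero, add_zero]; exact mul_ne_zero hc1 hdet)
  have hcover : S ⊆ (⋃ o ∈ O, S ∩ {o, o + a}) ∪ R := by
    intro x hx
    by_cases hxO : x ∈ O
    · exact Or.inl (Set.mem_biUnion hxO ⟨hx, Or.inl rfl⟩)
    by_cases hxaO : x + a ∈ O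
    · refine Or.inl (Set.mem_biUnion hxaO ⟨hx, Or.inr ?_⟩)
      rw [add_assoc, CharTwo.add_self_eq_zero, add_zero, Set.mem_singleton_iff]
    obtain ⟨hu, hFx⟩ := hO x hxO
    obtain ⟨hv, hFxa⟩ := hO (x + a) hxaO
    refine Or.inr (hRmem x (mobius_solution_quadratic hu hv ?_))
    rw [← hFx, ← hFxa]
    exact hx
  calc S.ncard ≤ ((⋃ o ∈ O, S ∩ {o, o + a}) ∪ R).ncard := Set.ncard_le_ncard hcover
    _ ≤ (⋃ o ∈ O, S ∩ {o, o + a}).ncard + (R : Set K).ncard := Set.ncard_union_le _ _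
    _ ≤ ∑ _o ∈ O, 1 + R.card := by
      rw [Set.ncard_coe_finset]
      gcongr
      exact (O.set_ncard_biUnion_le _).trans
        (Finset.sum_le_sum fun o _ => ncard_solutions_inter_pair_le_one hF hc a b o)
    _ ≤ O.card + 2 := by simpa using hR

end Mobius

theorem exists_isMobiusOff_carl {n : ℕ} {a : ℕ → GaloisField 2 n} (ha : a 0 ≠ 0) (m : ℕ) :
    ∃ O : Finset (GaloisField 2 n), O.card ≤ m ∧ IsMobiusOff (carl n a m) O := by
  induction m with
  | zero => exact ⟨∅, le_rfl, isMobiusOff_affine ha (a 1)⟩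
  | succ m ih =>
    obtain ⟨O, hOm, hO⟩ := ih
    obtain ⟨O', hO'O, hO'⟩ := hO.exists_inv_add (a (m + 2))
    exact ⟨O', by omega, hO'⟩

theorem stmt_11_general (n : ℕ) (F : GaloisField 2 n → GaloisField 2 n)
    (hF : Function.Bijective F) (m : ℕ)
    (hrep : hasCarlitzRep n m F)
    (c : GaloisField 2 n) (hc : c ≠ 1) :
    cdu n F c ≤ m + 2 := by
  obtain ⟨a, ha0, -, rfl⟩ := hrep
  obtain ⟨O, hOm, hO⟩ := exists_isMobiusOff_carl ha0 m
  refine csSup_le' ?_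
  rintro k ⟨a', b, -, rfl⟩
  calc cdCount n (carl n a m) c a' b = {x | carl n a m (x + a') + c * carl n a m x = b}.ncard :=
        Nat.card_coe_set_eq _
    _ ≤ O.card + 2 := hO.ncard_solutions_le hF.injective hc a' b
    _ ≤ m + 2 := by omega

theorem stmt_11 (n : ℕ) (F : GaloisField 2 n → GaloisField 2 n)
    (hF : Function.Bijective F) (m : ℕ) (hm : 1 ≤ m)
    (hrep : hasCarlitzRep n m F)
    (hmin : ∀ k, hasCarlitzRep n k F → m ≤ k)
    (c : GaloisField 2 n) (hc : c ≠ 1) :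
    cdu n F c ≤ m + 2 :=
  stmt_11_general n F hF m hrep c hc
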